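/- Let K and L be torsion-free groups and let G = K * L be their free product. For every g ∈ G which does not lie in the image of the canonical inclusion of K, the group homomorphism from the free product K * ℤ to G which restricts to the canonical inclusion of K and sends a generator of ℤ to g is injective. -/

import Mathlib

/-- The old Mathlib `Monoid.IsTorsionFree` (removed since): no nontrivial element has finite order. -/
def Monoid.IsTorsionFree (G : Type*) [Monoid G] : Prop :=
  ∀ g : G, g ≠ 1 → ¬IsOfFinOrder g

/-!
Multiplying `g` on both sides by elements of `K` only precomposes the map `K ∗ ℤ → K ∗ L` with
the automorphism `t ↦ a⁻¹ t b⁻¹` of `K ∗ ℤ`, so we may assume that the reduced word of `g` begins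
and ends with letters outside `K`. Every nonzero power of such an element again has this shape:
writing `g = a m c` with `a, c ∈ K`, either `c a = 1` and `g` is conjugate to the shorter `m`, or
`g ^ (n + 1) = a (m (c a)) ^ n m c` is reduced as written; a single letter has nontrivial powers
because the factors are torsion-free. Ping-pong with the sets "`1` or reduced words beginning in
`K`" and "reduced words beginning outside `K`" then shows injectivity. The argument works in any
free product `∗ᵢ Mᵢ` of torsion-free groups, with `K = Mᵢ`.
-/

open Function

universe u v w

theorem Monoid.IsTorsionFree.pow_ne_one {G : Type*} [Monoid G] (hG : Monoid.IsTorsionFree G)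
    {a : G} (ha : a ≠ 1) {n : ℕ} (hn : n ≠ 0) : a ^ n ≠ 1 :=
  fun h ↦ hG a ha (isOfFinOrder_iff_pow_eq_one.2 ⟨n, Nat.pos_of_ne_zero hn, h⟩)

theorem Monoid.IsTorsionFree.of_injective {G H : Type*} [Monoid G] [Monoid H]
    (hH : Monoid.IsTorsionFree H) (f : G →* H) (hf : Injective f) : Monoid.IsTorsionFree G :=
  fun g hg hfin ↦ hH (f g) (by rwa [ne_eq, ← map_one f, hf.eq_iff]) (f.isOfFinOrder hfin)

namespace Monoid.Coprod

section

variable {K G : Type*} [Group K] [Group G]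

theorem lift_zpowersHom_eq_comp (φ : K →* G) (g : G) (a b : K) :
    lift φ (zpowersHom G g) = (lift φ (zpowersHom G (φ a * g * φ b))).comp
      (lift inl (zpowersHom _ (inl a⁻¹ * inr (.ofAdd 1) * inl b⁻¹))) := by
  apply hom_ext
  · ext k
    simp
  · apply MonoidHom.ext_mint
    simp [mul_assoc]

theorem injective_lift_zpowersHom_of_mul_mul (φ : K →* G) (g : G) (a b : K)
    (h : Injective (lift φ (zpowersHom G (φ a * g * φ b)))) :
    Injective (lift φ (zpowersHom G g)) := by
  have hid : (lift inl (zpowersHom _ (inl a * inr (.ofAdd 1) * inl b))).comp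
      (lift inl (zpowersHom _ (inl a⁻¹ * inr (.ofAdd 1) * inl b⁻¹))) =
      MonoidHom.id (K ∗ Multiplicative ℤ) := by
    rw [← lift_zpowersHom_eq_comp]
    exact hom_ext rfl (MonoidHom.ext_mint (by simp))
  rw [lift_zpowersHom_eq_comp φ g a b]
  exact h.comp (LeftInverse.injective (DFunLike.congr_fun hid))

theorem injective_lift_zpowersHom_of_mulEquiv {K' G' : Type*} [Group K'] [Group G']
    {φ : K →* G} {φ' : K' →* G'} (e : K ≃* K') (E : G ≃* G') (he : ∀ k, E (φ k) = φ' (e k))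
    {g : G} (h : Injective (lift φ' (zpowersHom G' (E g)))) :
    Injective (lift φ (zpowersHom G g)) := by
  have hE : E.toMonoidHom.comp (lift φ (zpowersHom G g)) =
      (lift φ' (zpowersHom G' (E g))).comp (MulEquiv.coprodCongr e (.refl _)).toMonoidHom := by
    apply hom_ext
    · ext k
      simp [he]
    · apply MonoidHom.ext_mint
      simp
  refine Injective.of_comp (f := E.toMonoidHom) ?_
  rw [← MonoidHom.coe_comp, hE, MonoidHom.coe_comp]
  exact h.comp (MulEquiv.injective _)

end

variable (M N : Type w) [Group M] [Group N]

instance instGroupCond : ∀ b, Group (cond b M N)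
  | true => ‹Group M›
  | false => ‹Group N›

def mulEquivCoprodI : M ∗ N ≃* CoprodI (fun b ↦ cond b M N) :=
  MonoidHom.toMulEquiv
    (lift (CoprodI.of (M := fun b ↦ cond b M N) (i := true))
      (CoprodI.of (M := fun b ↦ cond b M N) (i := false)))
    (CoprodI.lift fun | true => inl | false => inr)
    (by apply hom_ext <;> ext <;> simp)
    (CoprodI.ext_hom _ _ fun | true => by ext; simp | false => by ext; simp)

variable {M N}

@[simp] theorem mulEquivCoprodI_apply_inl (m : M) :
    mulEquivCoprodI M N (inl m) = CoprodI.of (M := fun b ↦ cond b M N) (i := true) m :=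
  rfl

@[simp] theorem mulEquivCoprodI_apply_inr (n : N) :
    mulEquivCoprodI M N (inr n) = CoprodI.of (M := fun b ↦ cond b M N) (i := false) n :=
  rfl

end Monoid.Coprod

namespace Monoid.CoprodI

variable {ι : Type u} {M : ι → Type v}

section Monoid

variable [∀ i, Monoid (M i)]

theorem Word.prod_injective : Injective (Word.prod : Word M → CoprodI M) := by
  classical
  exact Word.equiv.symm.injective

open scoped Classical in
noncomputable def reducedLength (x : CoprodI M) : ℕ :=
  (Word.equiv x).toList.length

theorem reducedLength_prod (w : Word M) : reducedLength w.prod = w.toList.length := by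
  classical
  rw [reducedLength, show w.prod = Word.equiv.symm w from rfl, Equiv.apply_symm_apply]

def IsNeWordProd (i j : ι) (x : CoprodI M) : Prop :=
  ∃ w : NeWord M i j, w.prod = x

variable {i j k l : ι} {x y : CoprodI M}

theorem isNeWordProd_of {m : M i} (hm : m ≠ 1) : IsNeWordProd i i (of m) :=
  ⟨.singleton m hm, NeWord.prod_singleton m hm⟩

theorem IsNeWordProd.mul (hx : IsNeWordProd i j x) (hy : IsNeWordProd k l y) (hjk : j ≠ k) :
    IsNeWordProd i l (x * y) := by
  obtain ⟨w, rfl⟩ := hx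
  obtain ⟨w', rfl⟩ := hy
  exact ⟨w.append hjk w', NeWord.append_prod⟩

theorem IsNeWordProd.ne_one (hx : IsNeWordProd i j x) : x ≠ 1 := by
  obtain ⟨w, rfl⟩ := hx
  intro h
  have : w.toWord = Word.empty := Word.prod_injective (h.trans Word.prod_empty.symm)
  exact w.toList_ne_nil (congrArg Word.toList this)

theorem IsNeWordProd.fst_eq {i' j' : ι} (hx : IsNeWordProd i j x) (hx' : IsNeWordProd i' j' x) :
    i = i' := by
  obtain ⟨w, rfl⟩ := hx
  obtain ⟨w', hw'⟩ := hx'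
  have hw : w'.toWord = w.toWord := Word.prod_injective hw'
  have h := w'.toList_head?
  rw [show w'.toList = w.toList from congrArg Word.toList hw, w.toList_head?] at h
  exact congrArg Sigma.fst (Option.some.inj h)

theorem IsNeWordProd.reducedLength_mul (hx : IsNeWordProd i j x) (hy : IsNeWordProd k l y)
    (hjk : j ≠ k) : reducedLength (x * y) = reducedLength x + reducedLength y := by
  obtain ⟨w, rfl⟩ := hx
  obtain ⟨w', rfl⟩ := hy
  rw [← NeWord.append_prod (hne := hjk)]
  simp only [NeWord.prod, reducedLength_prod]
  exact List.length_append

theorem reducedLength_of {m : M i} (hm : m ≠ 1) : reducedLength (of m) = 1 := by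
  rw [← NeWord.prod_singleton m hm, NeWord.prod, reducedLength_prod]
  rfl

theorem IsNeWordProd.pow_succ_of_ne (hx : IsNeWordProd i j x) (hji : j ≠ i) (n : ℕ) :
    IsNeWordProd i j (x ^ (n + 1)) := by
  induction n with
  | zero => rwa [zero_add, pow_one]
  | succ n ih => rw [pow_succ]; exact ih.mul hx hji

theorem IsNeWordProd.exists_eq_of_mul (hx : IsNeWordProd i j x) :
    (i = j ∧ ∃ a : M i, a ≠ 1 ∧ x = of a) ∨
      ∃ a : M i, a ≠ 1 ∧ ∃ k ≠ i, ∃ y, IsNeWordProd k j y ∧ x = of a * y := by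
  obtain ⟨w, rfl⟩ := hx
  induction w with
  | singleton a ha => exact .inl ⟨rfl, a, ha, NeWord.prod_singleton a ha⟩
  | append w₁ hne w₂ ih₁ _ =>
    rw [NeWord.append_prod]
    rcases ih₁ with ⟨rfl, a, ha, h⟩ | ⟨a, ha, k, hk, y, hy, h⟩
    · exact .inr ⟨a, ha, _, hne.symm, _, ⟨w₂, rfl⟩, by rw [h]⟩
    · exact .inr ⟨a, ha, k, hk, _, hy.mul ⟨w₂, rfl⟩ hne, by rw [h, mul_assoc]⟩

end Monoid

section Group

variable [∀ i, Group (M i)] {i j : ι} {x : CoprodI M}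

theorem IsNeWordProd.inv (hx : IsNeWordProd i j x) : IsNeWordProd j i x⁻¹ := by
  obtain ⟨w, rfl⟩ := hx
  exact ⟨w.inv, NeWord.inv_prod w⟩

theorem IsNeWordProd.exists_eq_mul_of (hx : IsNeWordProd i j x) :
    (i = j ∧ ∃ c : M j, c ≠ 1 ∧ x = of c) ∨
      ∃ c : M j, c ≠ 1 ∧ ∃ k ≠ j, ∃ y, IsNeWordProd i k y ∧ x = y * of c := by
  rw [← inv_inv x]
  rcases hx.inv.exists_eq_of_mul with ⟨rfl, c, hc, h⟩ | ⟨c, hc, k, hk, y, hy, h⟩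
  · exact .inl ⟨rfl, c⁻¹, inv_ne_one.2 hc, by rw [h, map_inv]⟩
  · exact .inr ⟨c⁻¹, inv_ne_one.2 hc, k, hk, y⁻¹, hy.inv, by rw [h, mul_inv_rev, map_inv]⟩

theorem IsNeWordProd.exists_eq_of_mul_mul (hx : IsNeWordProd i i x) :
    (∃ a : M i, a ≠ 1 ∧ x = of a) ∨ ∃ a c : M i, a ≠ 1 ∧ c ≠ 1 ∧
      ∃ k ≠ i, ∃ l ≠ i, ∃ m, IsNeWordProd k l m ∧ x = of a * m * of c := by
  rcases hx.exists_eq_of_mul with ⟨-, h⟩ | ⟨a, ha, k, hk, y, hy, rfl⟩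
  · exact .inl h
  rcases hy.exists_eq_mul_of with ⟨rfl, -⟩ | ⟨c, hc, l, hl, m, hm, rfl⟩
  · exact absurd rfl hk
  · exact .inr ⟨a, c, ha, hc, k, hk, l, hl, m, hm, by rw [mul_assoc]⟩

theorem IsNeWordProd.pow (hM : ∀ i, IsTorsionFree (M i)) (hx : IsNeWordProd i j x) {n : ℕ}
    (hn : n ≠ 0) : IsNeWordProd i j (x ^ n) := by
  obtain ⟨n, rfl⟩ := Nat.exists_eq_succ_of_ne_zero hn
  induction hlen : reducedLength x using Nat.strong_induction_on generalizing x i j with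
  | _ N ih =>
  obtain rfl | hij := eq_or_ne i j
  swap
  · exact hx.pow_succ_of_ne hij.symm n
  rcases hx.exists_eq_of_mul_mul with ⟨a, ha, rfl⟩ | ⟨a, c, ha, hc, k, hk, l, hl, m, hm, rfl⟩
  · rw [← map_pow]
    exact isNeWordProd_of ((hM i).pow_ne_one ha n.succ_ne_zero)
  have hlen_m : reducedLength m < N := by
    rw [← hlen, mul_assoc, (isNeWordProd_of ha).reducedLength_mul
      (hm.mul (isNeWordProd_of hc) hl) hk.symm, hm.reducedLength_mul (isNeWordProd_of hc) hl,
      reducedLength_of ha]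
    omega
  by_cases hca : c * a = 1
  · rw [eq_inv_of_mul_eq_one_left hca, map_inv, conj_pow]
    exact ((isNeWordProd_of ha).mul (ih _ hlen_m hm rfl) hk.symm).mul
      (isNeWordProd_of (inv_ne_one.2 ha)) hl
  · cases n with
    | zero => rwa [pow_one]
    | succ n =>
      -- `x ^ (n + 2) = of a * (m * of (c * a)) ^ (n + 1) * (m * of c)`, reduced as written
      have hu : IsNeWordProd k i ((m * of (c * a)) ^ (n + 1)) :=
        (hm.mul (isNeWordProd_of hca) hl).pow_succ_of_ne hk.symm n
      rw [mul_assoc, pow_succ, ← mul_assoc, mul_pow_mul, mul_assoc m, ← map_mul]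
      exact ((isNeWordProd_of ha).mul hu hk.symm).mul (hm.mul (isNeWordProd_of hc) hl) hk.symm

theorem IsNeWordProd.zpow (hM : ∀ i, IsTorsionFree (M i)) (hx : IsNeWordProd i j x) {n : ℤ}
    (hn : n ≠ 0) : IsNeWordProd i j (x ^ n) ∨ IsNeWordProd j i (x ^ n) := by
  have hn' : n.natAbs ≠ 0 := Int.natAbs_ne_zero.2 hn
  rcases Int.natAbs_eq n with h | h <;> rw [h]
  · exact .inl (by rw [zpow_natCast]; exact hx.pow hM hn')
  · exact .inr (by rw [zpow_neg, zpow_natCast]; exact (hx.pow hM hn').inv)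

theorem exists_isNeWordProd_of_ne_one (hx : x ≠ 1) : ∃ i j, IsNeWordProd i j x := by
  classical
  obtain ⟨i, j, w, hw⟩ := NeWord.of_word (Word.equiv x) fun h ↦ hx <| by
    rw [← Word.equiv.symm_apply_apply x, h]
    exact Word.prod_empty
  exact ⟨i, j, w, by rw [NeWord.prod, hw]; exact Word.equiv.symm_apply_apply x⟩

theorem IsNeWordProd.notMem_range_of {k l : ι} (hx : IsNeWordProd k l x) (hki : k ≠ i) :
    x ∉ (of : M i →* CoprodI M).range := by
  rintro ⟨c, rfl⟩
  by_cases hc : c = 1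
  · exact hx.ne_one (by rw [hc, map_one])
  · exact hki (hx.fst_eq (isNeWordProd_of hc))

theorem IsNeWordProd.exists_isNeWordProd_of_mul {k l : ι} (hx : IsNeWordProd k l x)
    (hxi : x ∉ (of : M i →* CoprodI M).range) :
    ∃ a : M i, ∃ k ≠ i, IsNeWordProd k l (of a * x) := by
  by_cases hki : k = i
  · subst hki
    rcases hx.exists_eq_of_mul with ⟨-, a, -, rfl⟩ | ⟨a, -, k, hk, y, hy, rfl⟩
    · exact absurd ⟨a, rfl⟩ hxi
    · exact ⟨a⁻¹, k, hk, by rwa [← mul_assoc, ← map_mul, inv_mul_cancel, map_one, one_mul]⟩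
  · exact ⟨1, k, hki, by rwa [map_one, one_mul]⟩

theorem exists_isNeWordProd_of_mul_mul (hx : x ∉ (of : M i →* CoprodI M).range) :
    ∃ a b : M i, ∃ k ≠ i, ∃ l ≠ i, IsNeWordProd k l (of a * x * of b) := by
  have hx1 : x ≠ 1 := fun h ↦ hx ⟨1, by rw [map_one, h]⟩
  obtain ⟨j, l, hjl⟩ := exists_isNeWordProd_of_ne_one hx1
  obtain ⟨a, k, hk, hy⟩ := hjl.exists_isNeWordProd_of_mul hx
  obtain ⟨b, l, hl, hz⟩ := hy.inv.exists_isNeWordProd_of_mul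
    fun h ↦ hy.notMem_range_of hk (inv_mem_iff.1 h)
  refine ⟨a, b⁻¹, k, hk, l, hl, ?_⟩
  simpa only [mul_inv_rev, inv_inv, map_inv] using hz.inv

open Cardinal Pointwise in
theorem lift_injective_of_isNeWordProd {H : Bool → Type*} [∀ b, Group (H b)]
    (f : ∀ b, H b →* CoprodI M) (hcard : 3 ≤ #(H false))
    (htrue : ∀ h, h ≠ 1 → IsNeWordProd i i (f true h))
    (hfalse : ∀ t, t ≠ 1 → ∃ k ≠ i, ∃ l ≠ i, IsNeWordProd k l (f false t)) :
    Injective (lift f) := by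
  let X : Bool → Set (CoprodI M) := fun b ↦
    cond b (insert 1 {y | ∃ l, IsNeWordProd i l y}) {y | ∃ k ≠ i, ∃ l, IsNeWordProd k l y}
  refine lift_injective_of_ping_pong f (.inr ⟨false, hcard⟩) X ?_ ?_ ?_
  · rintro (_ | _)
    · obtain ⟨t, ht, -⟩ := exists_ne_ne_of_three_le hcard 1 1
      obtain ⟨k, hk, l, -, hl⟩ := hfalse t ht
      exact ⟨f false t, k, hk, l, hl⟩
    · exact ⟨1, Set.mem_insert 1 _⟩
  · refine pairwise_disjoint_on_bool.2 (Set.disjoint_left.2 ?_)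
    rintro y (rfl | ⟨l, hy⟩) ⟨k, hk, l', hy'⟩
    · exact hy'.ne_one rfl
    · exact hk (hy.fst_eq hy').symm
  · rintro (_ | _) (_ | _) hbc h hh <;> simp only [ne_eq, not_true_eq_false] at hbc <;>
      rw [Set.smul_set_subset_iff]
    · rintro y (rfl | ⟨l, hy⟩)
      · obtain ⟨k, hk, l, -, hh⟩ := hfalse h hh
        exact ⟨k, hk, l, by rwa [smul_eq_mul, mul_one]⟩
      · obtain ⟨k, hk, l', hl', hh⟩ := hfalse h hh
        exact ⟨k, hk, l, hh.mul hy hl'⟩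
    · rintro y ⟨k, hk, l, hy⟩
      exact Set.mem_insert_of_mem _ ⟨l, (htrue h hh).mul hy hk.symm⟩

theorem injective_coprodLift_zpowersHom (hM : ∀ i, IsTorsionFree (M i)) {i : ι}
    {x : CoprodI M} (hx : x ∉ (of : M i →* CoprodI M).range) :
    Injective (Coprod.lift (of : M i →* CoprodI M) (zpowersHom (CoprodI M) x)) := by
  obtain ⟨a, b, k, hk, l, hl, hx'⟩ := exists_isNeWordProd_of_mul_mul hx
  refine Coprod.injective_lift_zpowersHom_of_mul_mul _ x a b ?_
  set x' := of a * x * of b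
  let e := (MulEquiv.coprodCongr (.refl (M i)) MulEquiv.ulift.symm).trans
    (Coprod.mulEquivCoprodI (M i) (ULift.{v} (Multiplicative ℤ)))
  let f : ∀ b, cond b (M i) (ULift.{v} (Multiplicative ℤ)) →* CoprodI M
    | true => (of : M i →* CoprodI M)
    | false => (zpowersHom _ x').comp MulEquiv.ulift.toMonoidHom
  have hf : Coprod.lift of (zpowersHom _ x') = (lift f).comp e.toMonoidHom := by
    apply Coprod.hom_ext
    · ext m
      simp [e, f]
    · apply MonoidHom.ext_mint
      simp [e, f]
  rw [hf, MonoidHom.coe_comp]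
  refine Injective.comp ?_ e.injective
  refine lift_injective_of_isNeWordProd f ?_ (fun h hh ↦ isNeWordProd_of hh) fun t ht ↦ ?_
  · exact (Cardinal.natCast_lt_aleph0 (n := 3)).le.trans
      (Cardinal.aleph0_le_mk (ULift (Multiplicative ℤ)))
  · have hn : t.down.toAdd ≠ 0 := fun h ↦ ht (ULift.ext _ _ (by simpa using h))
    rcases hx'.zpow hM hn with h | h
    · exact ⟨k, hk, l, hl, h⟩
    · exact ⟨l, hl, k, hk, h⟩

end Group

end Monoid.CoprodI

open Monoid

theorem free_from_element_outside_factor (K L : Type*) [Group K] [Group L]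
    (hK : Monoid.IsTorsionFree K) (hL : Monoid.IsTorsionFree L)
    (g : Monoid.Coprod K L)
    (hg : g ∉ (Monoid.Coprod.inl : K →* Monoid.Coprod K L).range) :
    Function.Injective
      (Monoid.Coprod.lift (Monoid.Coprod.inl : K →* Monoid.Coprod K L)
        (zpowersHom (Monoid.Coprod K L) g) :
        Monoid.Coprod K (Multiplicative ℤ) →* Monoid.Coprod K L) := by
  let E : Coprod K L ≃* CoprodI fun b ↦ cond b (ULift.{u_2} K) (ULift.{u_1} L) :=
    (MulEquiv.coprodCongr MulEquiv.ulift.symm MulEquiv.ulift.symm).trans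
      (Coprod.mulEquivCoprodI _ _)
  have hTF : ∀ b, IsTorsionFree (cond b (ULift.{u_2} K) (ULift.{u_1} L))
    | true => hK.of_injective (MulEquiv.ulift (α := K)).toMonoidHom ULift.down_injective
    | false => hL.of_injective (MulEquiv.ulift (α := L)).toMonoidHom ULift.down_injective
  refine Coprod.injective_lift_zpowersHom_of_mulEquiv MulEquiv.ulift.symm E (fun _ ↦ rfl)
    (CoprodI.injective_coprodLift_zpowersHom (i := true) hTF ?_)
  rintro ⟨a, ha⟩
  exact hg ⟨a.down, E.injective (by rw [← ha]; rfl)⟩
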